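/- For every α ∈ (0,∞) with α ≠ 1 there exists a constant C > 0 such that |h_α(t)| ≤ C · t^β (1-t)^β for all t ∈ [0,1], where β = min(α, 1). -/

import Mathlib

/-!
Write `s = t ^ α + (1 - t) ^ α`. For `α < 1` we have `t ≤ t ^ α ≤ 1` and likewise for `1 - t`,
so `1 ≤ s` and `log s ≤ s - 1 ≤ t ^ α (1 - t) ^ α`, the last step being
`(1 - t ^ α) (1 - (1 - t) ^ α) ≥ 0`. For `α > 1` the inequalities reverse, so `s ≤ 1`; Bernoulli's
inequality gives `1 - s ≤ 2 α t (1 - t)`, and since `s ≥ 2 ^ (-α)` we get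
`-log s ≤ (1 - s) / s ≤ 2 ^ α (1 - s)`.
-/

open Real Set

namespace Real

lemma neg_log_le_div_of_le {c s : ℝ} (hc : 0 < c) (hcs : c ≤ s) (hs : s ≤ 1) :
    -log s ≤ (1 - s) / c := by
  have hs0 : 0 < s := hc.trans_le hcs
  calc -log s = log s⁻¹ := (log_inv s).symm
    _ ≤ s⁻¹ - 1 := log_le_sub_one_of_pos (inv_pos.2 hs0)
    _ = (1 - s) / s := by field_simp
    _ ≤ (1 - s) / c := div_le_div_of_nonneg_left (by linarith) hc hcs

variable {α t : ℝ}

lemma one_le_rpow_add_rpow_one_sub (hα : α ≤ 1) (ht : t ∈ Icc (0 : ℝ) 1) :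
    1 ≤ t ^ α + (1 - t) ^ α := by
  obtain ⟨ht0, ht1⟩ := ht
  have h₁ := self_le_rpow_of_le_one ht0 ht1 hα
  have h₂ := self_le_rpow_of_le_one (sub_nonneg.2 ht1) (by linarith) hα
  linarith

lemma rpow_add_rpow_one_sub_le_one (hα : 1 ≤ α) (ht : t ∈ Icc (0 : ℝ) 1) :
    t ^ α + (1 - t) ^ α ≤ 1 := by
  obtain ⟨ht0, ht1⟩ := ht
  have h₁ := rpow_le_self_of_le_one ht0 ht1 hα
  have h₂ := rpow_le_self_of_le_one (sub_nonneg.2 ht1) (by linarith) hα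
  linarith

lemma half_rpow_le_rpow_add_rpow_one_sub (hα : 0 ≤ α) (ht : t ∈ Icc (0 : ℝ) 1) :
    (1 / 2) ^ α ≤ t ^ α + (1 - t) ^ α := by
  obtain ⟨ht0, ht1⟩ := ht
  have h₁ := rpow_nonneg ht0 α
  have h₂ := rpow_nonneg (sub_nonneg.2 ht1) α
  rcases le_total (1 / 2) t with h | h
  · linarith [rpow_le_rpow (by norm_num) h hα]
  · linarith [rpow_le_rpow (by norm_num) (by linarith : 1 / 2 ≤ 1 - t) hα]

lemma one_sub_rpow_add_rpow_one_sub_le (hα : 1 ≤ α) (ht : t ∈ Icc (0 : ℝ) 1) :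
    1 - (t ^ α + (1 - t) ^ α) ≤ 2 * α * t * (1 - t) := by
  obtain ⟨ht0, ht1⟩ := ht
  have h₁ := rpow_nonneg ht0 α
  have h₂ := rpow_nonneg (sub_nonneg.2 ht1) α
  have bernoulli₁ : 1 - α * (1 - t) ≤ t ^ α := by
    have h := one_add_mul_self_le_rpow_one_add (s := t - 1) (by linarith) hα
    rw [add_sub_cancel] at h
    linarith
  have bernoulli₂ : 1 - α * t ≤ (1 - t) ^ α := by
    have h := one_add_mul_self_le_rpow_one_add (s := -t) (by linarith) hα
    rw [← sub_eq_add_neg] at h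
    linarith
  rcases le_total t (1 / 2) with h | h <;> nlinarith

lemma abs_log_rpow_add_rpow_one_sub_le_of_le_one (hα₀ : 0 ≤ α) (hα₁ : α ≤ 1)
    (ht : t ∈ Icc (0 : ℝ) 1) :
    |log (t ^ α + (1 - t) ^ α)| ≤ t ^ α * (1 - t) ^ α := by
  have hs := one_le_rpow_add_rpow_one_sub hα₁ ht
  obtain ⟨ht0, ht1⟩ := ht
  have h₁ := rpow_le_one ht0 ht1 hα₀
  have h₂ := rpow_le_one (sub_nonneg.2 ht1) (by linarith) hα₀
  rw [abs_of_nonneg (log_nonneg hs)]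
  calc log (t ^ α + (1 - t) ^ α) ≤ t ^ α + (1 - t) ^ α - 1 := log_le_sub_one_of_pos (by linarith)
    _ ≤ t ^ α * (1 - t) ^ α := by nlinarith [mul_nonneg (sub_nonneg.2 h₁) (sub_nonneg.2 h₂)]

lemma abs_log_rpow_add_rpow_one_sub_le_of_one_le (hα : 1 ≤ α) (ht : t ∈ Icc (0 : ℝ) 1) :
    |log (t ^ α + (1 - t) ^ α)| ≤ 2 ^ α * (2 * α) * t * (1 - t) := by
  have hs₁ := rpow_add_rpow_one_sub_le_one hα ht
  have hs₀ := half_rpow_le_rpow_add_rpow_one_sub (α := α) (by linarith) ht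
  have hhalf : (0 : ℝ) < (1 / 2) ^ α := by positivity
  rw [abs_of_nonpos (log_nonpos (hhalf.le.trans hs₀) hs₁)]
  calc -log (t ^ α + (1 - t) ^ α) ≤ (1 - (t ^ α + (1 - t) ^ α)) / (1 / 2) ^ α :=
        neg_log_le_div_of_le hhalf hs₀ hs₁
    _ ≤ 2 * α * t * (1 - t) / (1 / 2) ^ α := by
        gcongr
        exact one_sub_rpow_add_rpow_one_sub_le hα ht
    _ = 2 ^ α * (2 * α) * t * (1 - t) := by
        rw [div_rpow one_pos.le two_pos.le, one_rpow]
        field_simp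

end Real

theorem renyi_entropy_endpoint_bound (α : ℝ) (hα : 0 < α) (hα1 : α ≠ 1) :
    ∃ C : ℝ, 0 < C ∧ ∀ t ∈ Set.Icc (0:ℝ) 1,
      |(1 - α)⁻¹ * Real.log (t ^ α + (1 - t) ^ α)| ≤
        C * t ^ (min α 1) * (1 - t) ^ (min α 1) := by
  have hc : 0 < |1 - α|⁻¹ := inv_pos.2 (abs_pos.2 (sub_ne_zero.2 hα1.symm))
  rcases le_total α 1 with hle | hge
  · refine ⟨|1 - α|⁻¹, hc, fun t ht => ?_⟩
    rw [min_eq_left hle, abs_mul, abs_inv, mul_assoc]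
    exact mul_le_mul_of_nonneg_left (abs_log_rpow_add_rpow_one_sub_le_of_le_one hα.le hle ht) hc.le
  · refine ⟨|1 - α|⁻¹ * (2 ^ α * (2 * α)), by positivity, fun t ht => ?_⟩
    rw [min_eq_right hge, rpow_one, rpow_one, abs_mul, abs_inv]
    calc |1 - α|⁻¹ * |log (t ^ α + (1 - t) ^ α)|
        ≤ |1 - α|⁻¹ * (2 ^ α * (2 * α) * t * (1 - t)) :=
          mul_le_mul_of_nonneg_left (abs_log_rpow_add_rpow_one_sub_le_of_one_le hge ht) hc.le
      _ = |1 - α|⁻¹ * (2 ^ α * (2 * α)) * t * (1 - t) := by ring
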